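/- Let ε > 0, let n ≥ 2, and let x_1, …, x_n be real numbers such that |x_j − x_k| ≥ ε whenever j ≠ k. Then for every y ∈ ℝⁿ with ∑_{j=1}^n y_j = 0 one has ∑_{j,k=1}^n y_j y_k |x_j − x_k| ≤ −(ε/2) ∑_{j=1}^n y_j². -/
import Mathlib
open Finset

private lemma tele (x : ℕ → ℝ) {j k : ℕ} (h : j ≤ k) :
    ∑ i ∈ Ico j k, (x (i+1) - x i) = x k - x j := by
  induction k, h using Nat.le_induction with
  | base => simp
  | succ k hk ih => rw [Finset.sum_Ico_succ_top hk, ih]; ring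

private lemma split_if (a : ℝ) (j k i : ℕ) :
    (if min j k ≤ i ∧ i < max j k then a else 0) =
      (if j ≤ i ∧ i < k then a else 0) + (if k ≤ i ∧ i < j then a else 0) := by
  by_cases h1 : j ≤ i ∧ i < k <;> by_cases h2 : k ≤ i ∧ i < j
  · omega
  · have h : min j k ≤ i ∧ i < max j k := by omega
    rw [if_pos h, if_pos h1, if_neg h2, add_zero]
  · have h : min j k ≤ i ∧ i < max j k := by omega
    rw [if_pos h, if_neg h1, if_pos h2, zero_add]
  · have h : ¬(min j k ≤ i ∧ i < max j k) := by omega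
    rw [if_neg h, if_neg h1, if_neg h2, add_zero]

private lemma key (ε : ℝ) (hε : 0 < ε) (n : ℕ) (hn : 2 ≤ n) (x y : ℕ → ℝ)
    (hx : ∀ i, i + 1 < n → x i + ε ≤ x (i+1))
    (hy : ∑ j ∈ range n, y j = 0) :
    ∑ j ∈ range n, ∑ k ∈ range n, y j * y k * |x j - x k| ≤
      -(ε/2) * ∑ j ∈ range n, (y j)^2 := by
  set A : ℕ → ℝ := fun i => ∑ j ∈ range (i+1), y j with hA
  set d : ℕ → ℝ := fun i => x (i+1) - x i with hd
  have hdε : ∀ i, i + 1 < n → ε ≤ d i := fun i hi => by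
    have := hx i hi; simp only [hd]; linarith
  -- |x j - x k| as a sum of gaps
  have habs : ∀ j k, j < n → k < n →
      |x j - x k| = ∑ i ∈ Ico (min j k) (max j k), d i := by
    have base : ∀ j k, j ≤ k → k < n → |x j - x k| = ∑ i ∈ Ico j k, d i := by
      intro j k hjk hk
      have hnn : 0 ≤ ∑ i ∈ Ico j k, d i := by
        refine sum_nonneg fun i hi => ?_
        rw [mem_Ico] at hi
        have := hdε i (by omega)
        linarith
      have ht : ∑ i ∈ Ico j k, d i = x k - x j := tele x hjk
      rw [abs_sub_comm, abs_of_nonneg (by linarith), ht]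
    intro j k hj hk
    rcases le_total j k with h | h
    · rw [min_eq_left h, max_eq_right h]; exact base j k h hk
    · rw [min_eq_right h, max_eq_left h, abs_sub_comm]; exact base k j h hj
  -- the inner coefficient sum
  have hcoef : ∀ i, i + 1 < n →
      ∑ j ∈ range n, ∑ k ∈ range n,
        (if min j k ≤ i ∧ i < max j k then y j * y k * d i else 0)
        = (-2 * (A i)^2) * d i := by
    intro i hi
    have hsplit : ∑ j ∈ range n, ∑ k ∈ range n,
        (if min j k ≤ i ∧ i < max j k then y j * y k * d i else 0)
        = (∑ j ∈ range n, ∑ k ∈ range n,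
            (if j ≤ i ∧ i < k then y j * y k * d i else 0))
          + ∑ j ∈ range n, ∑ k ∈ range n,
            (if k ≤ i ∧ i < j then y j * y k * d i else 0) := by
      rw [← Finset.sum_add_distrib]
      refine Finset.sum_congr rfl fun j _ => ?_
      rw [← Finset.sum_add_distrib]
      exact Finset.sum_congr rfl fun k _ => split_if _ j k i
    have hfac1 : ∀ j k : ℕ, (if j ≤ i ∧ i < k then y j * y k * d i else 0)
        = (if j ≤ i then y j else 0) * (if i < k then y k * d i else 0) := by
      intro j k
      by_cases h1 : j ≤ i <;> by_cases h2 : i < k <;> simp [h1, h2] <;> ring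
    have hfac2 : ∀ j k : ℕ, (if k ≤ i ∧ i < j then y j * y k * d i else 0)
        = (if i < j then y j * d i else 0) * (if k ≤ i then y k else 0) := by
      intro j k
      by_cases h1 : k ≤ i <;> by_cases h2 : i < j <;> simp [h1, h2] <;> ring
    have hle : ∑ j ∈ range n, (if j ≤ i then y j else 0) = A i := by
      rw [Finset.sum_ite, Finset.sum_const_zero, add_zero]
      congr 1
      ext j; simp only [mem_filter, mem_range]; omega
    have hgt : ∑ k ∈ range n, (if i < k then y k else 0) = -(A i) := by
      have h1 : ∑ k ∈ range n, (if i < k then y k else 0) = ∑ k ∈ Ico (i+1) n, y k := by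
        rw [Finset.sum_ite, Finset.sum_const_zero, add_zero]
        congr 1
        ext j; simp only [mem_filter, mem_range, mem_Ico]; omega
      rw [h1, Finset.sum_Ico_eq_sub _ (by omega : i + 1 ≤ n), hy, hA]
      ring_nf
    have hgt' : ∑ k ∈ range n, (if i < k then y k * d i else 0) = -(A i) * d i := by
      have : ∀ k, (if i < k then y k * d i else 0) = (if i < k then y k else 0) * d i := by
        intro k; by_cases h : i < k <;> simp [h]
      simp_rw [this]
      rw [← Finset.sum_mul, hgt]
    rw [hsplit]
    have e1 : ∑ j ∈ range n, ∑ k ∈ range n,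
        (if j ≤ i ∧ i < k then y j * y k * d i else 0) = A i * (-(A i) * d i) := by
      simp_rw [hfac1, ← Finset.mul_sum, ← Finset.sum_mul, hle, hgt']
    have e2 : ∑ j ∈ range n, ∑ k ∈ range n,
        (if k ≤ i ∧ i < j then y j * y k * d i else 0) = (-(A i) * d i) * A i := by
      simp_rw [hfac2, ← Finset.mul_sum, ← Finset.sum_mul, hle]
      have : ∀ j, (if i < j then y j * d i else 0) = (if i < j then y j else 0) * d i := by
        intro j; by_cases h : i < j <;> simp [h]
      simp_rw [this]
      rw [← Finset.sum_mul, hgt]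
    rw [e1, e2]; ring
  -- rewrite Q
  have hQ : ∑ j ∈ range n, ∑ k ∈ range n, y j * y k * |x j - x k|
      = ∑ i ∈ range (n-1), (-2 * (A i)^2) * d i := by
    have step1 : ∀ j k, j < n → k < n → y j * y k * |x j - x k|
        = ∑ i ∈ range (n-1), (if min j k ≤ i ∧ i < max j k then y j * y k * d i else 0) := by
      intro j k hj hk
      rw [habs j k hj hk, Finset.mul_sum]
      rw [Finset.sum_ite, Finset.sum_const_zero, add_zero]
      congr 1
      ext i; simp only [mem_filter, mem_range, mem_Ico]; omega
    calc ∑ j ∈ range n, ∑ k ∈ range n, y j * y k * |x j - x k|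
        = ∑ j ∈ range n, ∑ k ∈ range n, ∑ i ∈ range (n-1),
            (if min j k ≤ i ∧ i < max j k then y j * y k * d i else 0) := by
          refine Finset.sum_congr rfl fun j hj => Finset.sum_congr rfl fun k hk => ?_
          exact step1 j k (mem_range.1 hj) (mem_range.1 hk)
      _ = ∑ i ∈ range (n-1), ∑ j ∈ range n, ∑ k ∈ range n,
            (if min j k ≤ i ∧ i < max j k then y j * y k * d i else 0) := by
          exact Eq.trans (Finset.sum_congr rfl fun j _ => Finset.sum_comm) Finset.sum_comm
      _ = ∑ i ∈ range (n-1), (-2 * (A i)^2) * d i := by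
          refine Finset.sum_congr rfl fun i hi => hcoef i (by have := mem_range.1 hi; omega)
  -- bound Q
  set T : ℝ := ∑ i ∈ range (n-1), (A i)^2 with hT
  have hQle : ∑ j ∈ range n, ∑ k ∈ range n, y j * y k * |x j - x k| ≤ -2 * ε * T := by
    rw [hQ, hT, Finset.mul_sum]
    refine Finset.sum_le_sum fun i hi => ?_
    have hdi : ε ≤ d i := hdε i (by have := mem_range.1 hi; omega)
    have hnp : -2 * (A i)^2 ≤ 0 := by nlinarith [sq_nonneg (A i)]
    calc (-2 * (A i)^2) * d i ≤ (-2 * (A i)^2) * ε := mul_le_mul_of_nonpos_left hdi hnp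
      _ = -2 * ε * (A i)^2 := by ring
  -- bound sum of squares
  have hy2 : ∑ j ∈ range n, (y j)^2 ≤ 4 * T := by
    obtain ⟨m, rfl⟩ : ∃ m, n = m + 1 := ⟨n - 1, by omega⟩
    have hm : 1 ≤ m := by omega
    simp only [Nat.add_sub_cancel] at hT
    have hAm : A m = 0 := hy
    have hA0 : A 0 = y 0 := by simp [hA]
    have hAs : ∀ j, y (j+1) = A (j+1) - A j := by
      intro j
      simp only [hA, Finset.sum_range_succ]
      ring
    have h1 : ∑ j ∈ range (m+1), (y j)^2
        = ∑ j ∈ range m, (y (j+1))^2 + (y 0)^2 := Finset.sum_range_succ' _ m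
    have h2 : ∑ j ∈ range m, (y (j+1))^2
        ≤ ∑ j ∈ range m, (2 * (A (j+1))^2 + 2 * (A j)^2) := by
      refine Finset.sum_le_sum fun j _ => ?_
      rw [hAs j]
      nlinarith [sq_nonneg (A (j+1) + A j)]
    have h3 : ∑ j ∈ range m, (A (j+1))^2 = T - (A 0)^2 := by
      have := Finset.sum_range_succ' (fun j => (A j)^2) m
      have h4 : ∑ j ∈ range (m+1), (A j)^2 = T + (A m)^2 := Finset.sum_range_succ _ m
      rw [h4, hAm] at this
      linarith [this]
    have h5 : ∑ j ∈ range m, (2 * (A (j+1))^2 + 2 * (A j)^2)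
        = 2 * (T - (A 0)^2) + 2 * T := by
      rw [Finset.sum_add_distrib, ← Finset.mul_sum, ← Finset.mul_sum, h3, hT]
    have hA0sq : (A 0)^2 = (y 0)^2 := by rw [hA0]
    linarith [sq_nonneg (A 0)]
  have hT0 : 0 ≤ T := Finset.sum_nonneg fun i _ => sq_nonneg _
  nlinarith [hQle, hy2, hε]
theorem stmt10 (ε : ℝ) (hε : 0 < ε) (n : ℕ) (hn : 2 ≤ n)
    (x : Fin n → ℝ) (hsep : ∀ j k, j ≠ k → ε ≤ |x j - x k|)
    (y : Fin n → ℝ) (hy : ∑ j, y j = 0) :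
    ∑ j, ∑ k, y j * y k * |x j - x k| ≤ -(ε / 2) * ∑ j, (y j) ^ 2 := by
  set σ := Tuple.sort x with hσ
  have hmono : Monotone (x ∘ σ) := Tuple.monotone_sort x
  set x' : ℕ → ℝ := fun i => if h : i < n then x (σ ⟨i, h⟩) else 0 with hx'
  set y' : ℕ → ℝ := fun i => if h : i < n then y (σ ⟨i, h⟩) else 0 with hy'
  have hx'' : ∀ j : Fin n, x' ↑j = x (σ j) := fun j => by
    simp [hx', j.isLt]
  have hy'' : ∀ j : Fin n, y' ↑j = y (σ j) := fun j => by
    simp [hy', j.isLt]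
  have hgap : ∀ i, i + 1 < n → x' i + ε ≤ x' (i+1) := by
    intro i hi
    have h0 : i < n := by omega
    have a : Fin n := ⟨i, h0⟩
    have hle : x (σ ⟨i, h0⟩) ≤ x (σ ⟨i+1, hi⟩) :=
      hmono (show (⟨i, h0⟩ : Fin n) ≤ ⟨i+1, hi⟩ by simp [Fin.le_def])
    have hne : σ ⟨i+1, hi⟩ ≠ σ ⟨i, h0⟩ := by
      intro h
      have := σ.injective h
      simp [Fin.ext_iff] at this
    have hsep' := hsep (σ ⟨i+1, hi⟩) (σ ⟨i, h0⟩) hne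
    rw [abs_of_nonneg (by linarith)] at hsep'
    simp only [hx', dif_pos h0, dif_pos hi]
    linarith
  have hsum0 : ∑ j ∈ Finset.range n, y' j = 0 := by
    rw [← Fin.sum_univ_eq_sum_range y' n]
    rw [show ∑ j : Fin n, y' ↑j = ∑ j : Fin n, y (σ j) from
      Finset.sum_congr rfl fun j _ => hy'' j]
    rw [Equiv.sum_comp σ y]
    exact hy
  have swap2 : ∀ g : Fin n → Fin n → ℝ, ∑ j, ∑ k, g (σ j) (σ k) = ∑ j, ∑ k, g j k := by
    intro g
    calc ∑ j, ∑ k, g (σ j) (σ k) = ∑ j, ∑ k, g (σ j) k :=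
          Finset.sum_congr rfl fun j _ => Equiv.sum_comp σ (g (σ j))
      _ = ∑ j, ∑ k, g j k := Equiv.sum_comp σ (fun j => ∑ k, g j k)
  have eLHS : ∑ j, ∑ k, y j * y k * |x j - x k|
      = ∑ j ∈ Finset.range n, ∑ k ∈ Finset.range n, y' j * y' k * |x' j - x' k| := by
    rw [← Fin.sum_univ_eq_sum_range (fun j => ∑ k ∈ Finset.range n,
      y' j * y' k * |x' j - x' k|) n]
    rw [← swap2 (fun j k => y j * y k * |x j - x k|)]
    refine Finset.sum_congr rfl fun j _ => ?_
    rw [← Fin.sum_univ_eq_sum_range (fun k => y' ↑j * y' k * |x' ↑j - x' k|) n]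
    exact Finset.sum_congr rfl fun k _ => by rw [hx'' j, hx'' k, hy'' j, hy'' k]
  have eRHS : ∑ j, (y j) ^ 2 = ∑ j ∈ Finset.range n, (y' j) ^ 2 := by
    rw [← Fin.sum_univ_eq_sum_range (fun j => (y' j) ^ 2) n]
    rw [← Equiv.sum_comp σ (fun j => (y j) ^ 2)]
    exact Finset.sum_congr rfl fun j _ => by rw [hy'' j]
  rw [eLHS, eRHS]
  exact key ε hε n hn x' y' hgap hsum0
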